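/- arXiv:2409.18598 — 2 statements merged into one kernel-verified Lean document; each statement's English description precedes it below -/
import Mathlib

section
/- Let G be an outerplanar graph with a universal vertex u' (adjacent to all other vertices). Then the subgraph induced on V(G) \ {u'} is a disjoint union of paths. -/
open SimpleGraph Matrix

/-- `H` is a minor of `G`: branch sets are connected, pairwise disjoint, and
edges of `H` are represented by edges between branch sets. -/
def MinorOf {α : Type*} {β : Type*} (H : SimpleGraph α) (G : SimpleGraph β) : Prop :=
  ∃ f : α → Set β,
    (∀ a, (G.induce (f a)).Connected) ∧
    (Pairwise fun a b => Disjoint (f a) (f b)) ∧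
    ∀ a b, H.Adj a b → ∃ u ∈ f a, ∃ v ∈ f b, G.Adj u v

/-- A graph is outerplanar iff it has no `K₄`-minor and no `K_{2,3}`-minor. -/
def Outerplanar {β : Type*} (G : SimpleGraph β) : Prop :=
  ¬ MinorOf (completeGraph (Fin 4)) G ∧ ¬ MinorOf (completeBipartiteGraph (Fin 2) (Fin 3)) G

/-- The join `G ∨ H` of two graphs. -/
def graphJoin {α β : Type*} (G : SimpleGraph α) (H : SimpleGraph β) : SimpleGraph (α ⊕ β) where
  Adj x y :=
    match x, y with
    | Sum.inl a, Sum.inl b => G.Adj a b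
    | Sum.inr a, Sum.inr b => H.Adj a b
    | Sum.inl _, Sum.inr _ => True
    | Sum.inr _, Sum.inl _ => True
  symm := by constructor; rintro (a|a) (b|b) h <;> first | exact h.symm | trivial
  loopless := by
    constructor
    rintro (a|a) h
    · exact G.loopless.irrefl a h
    · exact H.loopless.irrefl a h

open scoped Classical in
/-- The adjacency spectral radius of a finite graph. -/
noncomputable def specRad {V : Type*} [Fintype V] [DecidableEq V]
    (G : SimpleGraph V) : ℝ :=
  sSup (spectrum ℝ (G.adjMatrix ℝ))

/-- The disjoint union of paths with orders given by the list `L`. -/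
def pathsUnion (L : List ℕ) : SimpleGraph (Σ i : Fin L.length, Fin (L.get i)) where
  Adj x y := x.1 = y.1 ∧ (x.2.val + 1 = y.2.val ∨ y.2.val + 1 = x.2.val)
  symm := by constructor; rintro ⟨i, a⟩ ⟨j, b⟩ ⟨h1, h2⟩; exact ⟨h1.symm, h2.symm⟩
  loopless := by constructor; rintro ⟨i, a⟩ ⟨-, h⟩; rcases h with h | h <;> omega

/-- `B_{tl}`: `t` edge-disjoint `l`-cycles sharing exactly one common vertex (`none`). -/
def bouquet (t l : ℕ) : SimpleGraph (Option (Fin t × Fin (l - 1))) where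
  Adj x y :=
    match x, y with
    | none, none => False
    | none, some p => p.2.val = 0 ∨ p.2.val = l - 2
    | some p, none => p.2.val = 0 ∨ p.2.val = l - 2
    | some p, some q => p.1 = q.1 ∧ (p.2.val + 1 = q.2.val ∨ q.2.val + 1 = p.2.val)
  symm := by
    constructor
    rintro (_|p) (_|q) h
    · exact h
    · exact h
    · exact h
    · exact ⟨h.1.symm, h.2.symm⟩
  loopless := by
    constructor
    rintro (_|p) h
    · exact h
    · rcases h.2 with h' | h' <;> omega

/-- `F` occurs as a subgraph of `G`. -/
def ContainsSubgraph {α β : Type*} (F : SimpleGraph α) (G : SimpleGraph β) : Prop :=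
  ∃ f : F →g G, Function.Injective f

/-- `G` has a matching of size `k`. -/
def HasMatching {V : Type*} (G : SimpleGraph V) (k : ℕ) : Prop :=
  ∃ M : Finset (Sym2 V), M.card = k ∧ ↑M ⊆ G.edgeSet ∧
    (M : Set (Sym2 V)).Pairwise fun e f => ∀ v, v ∈ e → v ∉ f

/-- A linear forest: a disjoint union of (possibly trivial) paths. -/
def IsLinearForest {V : Type*} (H : SimpleGraph V) : Prop :=
  H.IsAcyclic ∧ ∀ v, (H.neighborSet v).ncard ≤ 2

/-- `G` contains a cycle of length `l`. -/
def HasCycleLength {V : Type*} (G : SimpleGraph V) (l : ℕ) : Prop :=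
  ∃ (u : V) (w : G.Walk u u), w.IsCycle ∧ w.length = l
/-!
Every vertex of `G - u'` is adjacent to `u'`. A vertex of `G - u'` with three neighbours
there shares them with `u'`, giving a `K_{2,3}` subgraph. A cycle of `G - u'` contracts to a
triangle, and coning it off at `u'` gives a `K₄` minor.
-/

namespace SimpleGraph

variable {α β : Type*} {G : SimpleGraph β}

def IsMinorModel (H : SimpleGraph α) (G : SimpleGraph β) (f : α → Set β) : Prop :=
  (∀ a, (G.induce (f a)).Connected) ∧ (Pairwise fun a b => Disjoint (f a) (f b)) ∧
    ∀ a b, H.Adj a b → ∃ u ∈ f a, ∃ v ∈ f b, G.Adj u v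

theorem IsMinorModel.minorOf {H : SimpleGraph α} {f : α → Set β} (hf : IsMinorModel H G f) :
    MinorOf H G :=
  ⟨f, hf⟩

theorem connected_induce_singleton (x : β) : (G.induce {x}).Connected := by
  rw [induce_singleton_eq_top]
  exact connected_top

theorem _root_.ContainsSubgraph.minorOf {H : SimpleGraph α} (h : ContainsSubgraph H G) :
    MinorOf H G := by
  obtain ⟨f, hf⟩ := h
  exact ⟨fun a => {f a}, fun a => connected_induce_singleton (f a),
    fun a b hab => Set.disjoint_singleton.2 (hf.ne hab),
    fun a b hab => ⟨f a, rfl, f b, rfl, f.map_adj hab⟩⟩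

theorem isMinorModel_completeGraph_of_lt {n : ℕ} {f : Fin n → Set β}
    (hconn : ∀ i, (G.induce (f i)).Connected)
    (hlt : ∀ i j, i < j → Disjoint (f i) (f j) ∧ ∃ u ∈ f i, ∃ v ∈ f j, G.Adj u v) :
    IsMinorModel (completeGraph (Fin n)) G f := by
  refine ⟨hconn, fun i j hij => ?_, fun i j hij => ?_⟩
  · rcases hij.lt_or_gt with h | h
    · exact (hlt i j h).1
    · exact (hlt j i h).1.symm
  · rcases hij.lt_or_gt with h | h
    · exact (hlt i j h).2
    · obtain ⟨u, hu, v, hv, huv⟩ := (hlt j i h).2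
      exact ⟨v, hv, u, hu, huv.symm⟩

theorem IsMinorModel.cone {n : ℕ} {f : Fin n → Set β}
    (hf : IsMinorModel (completeGraph (Fin n)) G f) {x : β}
    (hx : ∀ i, ∀ v ∈ f i, G.Adj x v) :
    IsMinorModel (completeGraph (Fin (n + 1))) G (Fin.cons {x} f) := by
  obtain ⟨hconn, hdisj, hadj⟩ := hf
  refine isMinorModel_completeGraph_of_lt (Fin.cases (connected_induce_singleton x) hconn)
    fun i j hij => ?_
  cases j using Fin.cases with
  | zero => exact absurd hij (Fin.not_lt_zero i)
  | succ j =>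
    cases i using Fin.cases with
    | zero =>
      obtain ⟨v, hv⟩ := (hconn j).nonempty
      exact ⟨Set.disjoint_singleton_left.2 fun hxj => G.loopless.irrefl x (hx j x hxj),
        x, rfl, v, hv, hx j v hv⟩
    | succ i =>
      have hij : i ≠ j := (Fin.succ_lt_succ_iff.1 hij).ne
      exact ⟨hdisj hij, hadj i j hij⟩

theorem Walk.IsCycle.exists_isMinorModel_completeGraph_three {a : β} {w : G.Walk a a}
    (hw : w.IsCycle) :
    ∃ f : Fin 3 → Set β, IsMinorModel (completeGraph (Fin 3)) G f ∧
      ∀ i, f i ⊆ {v | v ∈ w.support} := by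
  cases w with
  | nil => exact absurd rfl hw.ne_nil
  | @cons _ b _ hab p =>
  obtain ⟨hp, hab_p⟩ := (Walk.cons_isCycle_iff p hab).1 hw
  cases p with
  | nil => exact absurd hab (G.loopless.irrefl _)
  | @cons _ c _ hbc q =>
  obtain ⟨hq, hbq⟩ := (Walk.cons_isPath_iff hbc q).1 hp
  -- the third branch set: `q` without its endpoint `a`
  cases hr : q.reverse with
  | nil => simp [Sym2.eq_swap] at hab_p
  | @cons _ d _ had r =>
  have hr_path : (Walk.cons had r).IsPath := hr ▸ hq.reverse
  have hr_sub : ∀ v ∈ r.support, v ∈ q.support := fun v hv => by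
    rw [← List.mem_reverse, ← Walk.support_reverse, hr, Walk.support_cons]
    exact List.mem_cons_of_mem _ hv
  have har : a ∉ r.support := ((Walk.cons_isPath_iff had r).1 hr_path).2
  have hbr : b ∉ r.support := fun hb => hbq (hr_sub b hb)
  refine ⟨![{a}, {b}, {v | v ∈ r.support}], isMinorModel_completeGraph_of_lt ?_ ?_, ?_⟩
  · intro i
    fin_cases i
    exacts [connected_induce_singleton a, connected_induce_singleton b,
      r.connected_induce_support]
  · intro i j hij
    fin_cases i <;> fin_cases j <;> try exact absurd hij (by decide)
    · exact ⟨Set.disjoint_singleton.2 hab.ne, a, rfl, b, rfl, hab⟩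
    · exact ⟨Set.disjoint_singleton_left.2 har, a, rfl, d, r.start_mem_support, had⟩
    · exact ⟨Set.disjoint_singleton_left.2 hbr, b, rfl, c, r.end_mem_support, hbc⟩
  · intro i v hv
    fin_cases i <;> simp_all

theorem isAcyclic_induce_of_forall_mem_adj (hG : ¬ MinorOf (completeGraph (Fin 4)) G)
    {s : Set β} {x : β} (hx : ∀ v ∈ s, G.Adj x v) : (G.induce s).IsAcyclic := by
  intro a w hw
  have hw' : (w.map (Embedding.induce s).toHom).IsCycle := hw.map Subtype.val_injective
  have hw_sub : ∀ v ∈ (w.map (Embedding.induce s).toHom).support, v ∈ s := by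
    intro v hv
    obtain ⟨y, -, rfl⟩ := List.mem_map.1 ((Walk.support_map _ w) ▸ hv)
    exact y.2
  obtain ⟨f, hf, hf_sub⟩ := hw'.exists_isMinorModel_completeGraph_three
  exact hG (hf.cone fun i v hv => hx v (hw_sub v (hf_sub i hv))).minorOf

theorem containsSubgraph_completeBipartiteGraph_two_three {x y a b c : β} (hxy : x ≠ y)
    (hab : a ≠ b) (hac : a ≠ c) (hbc : b ≠ c)
    (h : {a, b, c} ⊆ G.commonNeighbors x y) :
    ContainsSubgraph (completeBipartiteGraph (Fin 2) (Fin 3)) G := by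
  obtain ⟨hx, hy⟩ :
      (G.Adj x a ∧ G.Adj x b ∧ G.Adj x c) ∧ (G.Adj y a ∧ G.Adj y b ∧ G.Adj y c) := by
    simp only [Set.insert_subset_iff, Set.singleton_subset_iff, mem_commonNeighbors] at h
    tauto
  refine ⟨⟨Sum.elim ![x, y] ![a, b, c], ?_⟩, ?_⟩
  · rintro (i | i) (j | j) hij
    · exact absurd hij (by simp)
    · fin_cases i <;> fin_cases j <;> simp [hx, hy]
    · fin_cases i <;> fin_cases j <;>
        simp [hx.1.symm, hx.2.1.symm, hx.2.2.symm, hy.1.symm, hy.2.1.symm, hy.2.2.symm]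
    · exact absurd hij (by simp)
  · refine Function.Injective.sumElim ?_ ?_ fun i j => ?_
    · intro i j
      fin_cases i <;> fin_cases j <;> simp [hxy, hxy.symm]
    · intro i j
      fin_cases i <;> fin_cases j <;> simp [hab, hac, hbc, hab.symm, hac.symm, hbc.symm]
    · fin_cases i <;> fin_cases j <;>
        simp [hx.1.ne, hx.2.1.ne, hx.2.2.ne, hy.1.ne, hy.2.1.ne, hy.2.2.ne]

theorem ncard_neighborSet_induce_le_two
    (hG : ¬ MinorOf (completeBipartiteGraph (Fin 2) (Fin 3)) G)
    {s : Set β} {x : β} (hx : ∀ v ∈ s, G.Adj x v) (v : s) :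
    ((G.induce s).neighborSet v).ncard ≤ 2 := by
  by_contra! h
  obtain ⟨a, ha, b, hb, c, hc, hab, hac, hbc⟩ :=
    (Set.two_lt_ncard (Set.finite_of_ncard_pos (by omega))).1 h
  refine hG (containsSubgraph_completeBipartiteGraph_two_three (hx v v.2).ne'
    (Subtype.coe_ne_coe.2 hab) (Subtype.coe_ne_coe.2 hac) (Subtype.coe_ne_coe.2 hbc) ?_).minorOf
  rintro z (rfl | rfl | rfl)
  exacts [⟨ha, hx a a.2⟩, ⟨hb, hx b b.2⟩, ⟨hc, hx c c.2⟩]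

end SimpleGraph

theorem outerplanar_universal_linear_forest_general {V : Type*} (G : SimpleGraph V)
    (hG : Outerplanar G) (u' : V) (huniv : ∀ v, v ≠ u' → G.Adj u' v) :
    IsLinearForest (G.induce {v : V | v ≠ u'}) :=
  ⟨isAcyclic_induce_of_forall_mem_adj hG.1 huniv, ncard_neighborSet_induce_le_two hG.2 huniv⟩

theorem outerplanar_universal_linear_forest {V : Type*} [Fintype V] (G : SimpleGraph V)
    (hG : Outerplanar G) (u' : V) (huniv : ∀ v, v ≠ u' → G.Adj u' v) :
    IsLinearForest (G.induce {v : V | v ≠ u'}) :=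
  outerplanar_universal_linear_forest_general G hG u' huniv
end

section
/- Let t ≥ 3, ℓ ≥ 3, and let H be a disjoint union of paths with path orders n₁ ≥ n₂ ≥ ⋯. If K_2 ∨ H contains no B_{tℓ}, then n₁ + n₂ ≤ (t-1)(ℓ-1) + ℓ - 3. -/
open SimpleGraph Matrix

/-!
Running along the first path, through `u''` and back along the second path gives a path on
`n₁ + n₂ + 1` vertices of `K₂ ∨ H`, all adjacent to `u'`. If `t (ℓ - 1) ≤ n₁ + n₂ + 1`, cut its
first `t (ℓ - 1)` vertices into `t` consecutive blocks of `ℓ - 1`: each block closes up through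
`u'` into an `ℓ`-cycle, and these cycles form a `B_{tℓ}` centred at `u'`.
-/

theorem containsSubgraph_bouquet_of_cone_path {V : Type*} {G : SimpleGraph V} {t l N : ℕ}
    (hN : t * (l - 1) ≤ N) (c : V) (φ : Fin N → V) (hinj : Function.Injective φ)
    (hpath : ∀ i j : Fin N, (j : ℕ) = i + 1 → G.Adj (φ i) (φ j))
    (hcone : ∀ i, G.Adj c (φ i)) :
    ContainsSubgraph (bouquet t l) G := by
  let ι : Fin t × Fin (l - 1) → Fin N := fun p => Fin.castLE hN (finProdFinEquiv p)
  have hι : Function.Injective ι := (Fin.castLE_injective hN).comp finProdFinEquiv.injective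
  let f : Option (Fin t × Fin (l - 1)) → V := fun x => x.elim c (φ ∘ ι)
  have hadj : ∀ x y, (bouquet t l).Adj x y → G.Adj (f x) (f y) := by
    rintro (_ | p) (_ | q) h
    · exact h.elim
    · exact hcone _
    · exact (hcone _).symm
    · obtain ⟨h₁, h₂ | h₂⟩ := h
      · exact hpath _ _ (by simp [ι, h₁]; omega)
      · exact (hpath _ _ (by simp [ι, h₁]; omega)).symm
  refine ⟨⟨f, hadj _ _⟩, ?_⟩
  rintro (_ | p) (_ | q) h
  · rfl
  · exact absurd h (hcone _).ne
  · exact absurd h.symm (hcone _).ne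
  · exact congrArg some (hι (hinj h))

section Spine

variable (n₁ n₂ : ℕ) (rest : List ℕ)

def spine (m : Fin (n₁ + n₂ + 1)) :
    Fin 2 ⊕ (Σ i : Fin (n₁ :: n₂ :: rest).length, Fin ((n₁ :: n₂ :: rest).get i)) :=
  if h₁ : (m : ℕ) < n₁ then Sum.inr ⟨⟨0, by simp⟩, m, h₁⟩
  else if h₂ : (m : ℕ) = n₁ then Sum.inl 1
  else Sum.inr ⟨⟨1, by simp⟩, n₁ + n₂ - m, by
      simp only [List.get_eq_getElem, List.getElem_cons_succ, List.getElem_cons_zero]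
      omega⟩

theorem spine_injective : Function.Injective (spine n₁ n₂ rest) := by
  intro m m' h
  unfold spine at h
  ext
  split_ifs at h <;> simp only [Sum.inr.injEq, Sigma.mk.inj_iff, Fin.mk.injEq, heq_eq_eq,
    zero_ne_one, one_ne_zero, false_and] at h <;> omega

theorem spine_adj {m m' : Fin (n₁ + n₂ + 1)} (h : (m' : ℕ) = m + 1) :
    (graphJoin (completeGraph (Fin 2)) (pathsUnion (n₁ :: n₂ :: rest))).Adj
      (spine n₁ n₂ rest m) (spine n₁ n₂ rest m') := by
  unfold spine
  split_ifs <;> first | trivial | omega | exact ⟨rfl, by dsimp only; omega⟩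

theorem adj_spine (m : Fin (n₁ + n₂ + 1)) :
    (graphJoin (completeGraph (Fin 2)) (pathsUnion (n₁ :: n₂ :: rest))).Adj
      (Sum.inl 0) (spine n₁ n₂ rest m) := by
  unfold spine
  split_ifs <;> first | trivial | exact (by decide : (0 : Fin 2) ≠ 1)

end Spine

theorem btl_free_K2_join_general (t l : ℕ) (n₁ n₂ : ℕ) (rest : List ℕ)
    (hfree : ¬ ContainsSubgraph (bouquet t l)
      (graphJoin (completeGraph (Fin 2)) (pathsUnion (n₁ :: n₂ :: rest)))) :
    n₁ + n₂ ≤ (t - 1) * (l - 1) + l - 3 := by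
  by_contra! hlong
  have hN : t * (l - 1) ≤ n₁ + n₂ + 1 := by
    rcases t with _ | t
    · simp
    rcases l with _ | k
    · simp
    simp only [Nat.add_sub_cancel, Nat.succ_mul] at hlong ⊢
    omega
  exact hfree (containsSubgraph_bouquet_of_cone_path hN (Sum.inl 0) (spine n₁ n₂ rest)
    (spine_injective n₁ n₂ rest) (fun _ _ => spine_adj n₁ n₂ rest) (adj_spine n₁ n₂ rest))

theorem btl_free_K2_join (t l : ℕ) (ht : 3 ≤ t) (hl : 3 ≤ l) (n₁ n₂ : ℕ) (rest : List ℕ)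
    (hsorted : (n₁ :: n₂ :: rest).Pairwise (· ≥ ·)) (hpos : ∀ m ∈ n₁ :: n₂ :: rest, 1 ≤ m)
    (hfree : ¬ ContainsSubgraph (bouquet t l)
      (graphJoin (completeGraph (Fin 2)) (pathsUnion (n₁ :: n₂ :: rest)))) :
    n₁ + n₂ ≤ (t - 1) * (l - 1) + l - 3 :=
  btl_free_K2_join_general t l n₁ n₂ rest hfree
end
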